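/- Let k be a finite field with |k| = q. Let ℱ = {f_1(x_1),…,f_n(x_n)} ⊆ k[x_1,…,x_n] where each f_i is a univariate polynomial in x_i of degree at most d, and let ℰ = {x_i^q − x_i : i = 1,…,n}. Then the last fall degree of ℱ ∪ ℰ satisfies d_{ℱ∪ℰ} ≤ d + q. Moreover, setting h_i(x_i) = gcd(x_i^q − x_i, f_i(x_i)), the ideal generated by ℱ ∪ ℰ is generated by {h_1(x_1),…,h_n(x_n)}, and h_i ≡_{d_i+q} 0 (mod ℱ ∪ ℰ) where d_i = deg f_i. -/

import Mathlib

open MvPolynomial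

attribute [local instance] Classical.decEq

/-- `V_{ℱ,i}`: the smallest `K`-subspace of `K[x]` containing every `f ∈ ℱ` of degree
`≤ i` and closed under multiplication by polynomials as long as the degree stays `≤ i`. -/
noncomputable def Vsp {σ K : Type*} [Field K]
    (F : Set (MvPolynomial σ K)) (i : ℕ) : Submodule K (MvPolynomial σ K) :=
  sInf {V : Submodule K (MvPolynomial σ K) |
    (∀ f ∈ F, f.totalDegree ≤ i → f ∈ V) ∧
    ∀ g ∈ V, ∀ h : MvPolynomial σ K, (h * g).totalDegree ≤ i → h * g ∈ V}

section Aux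
variable {k : Type*} [Field k]

/-- totalDegree of a univariate polynomial substituted at a variable. -/
lemma totalDegree_aeval_X_le {σ : Type*} (i : σ) (p : Polynomial k) :
    (Polynomial.aeval (X i : MvPolynomial σ k) p).totalDegree ≤ p.natDegree := by
  rw [Polynomial.aeval_eq_sum_range]
  refine (totalDegree_finset_sum _ _).trans ?_
  apply Finset.sup_le
  intro t ht
  refine (totalDegree_smul_le _ _).trans ?_
  refine (totalDegree_pow _ _).trans ?_
  rw [totalDegree_X, mul_one]
  exact Nat.lt_succ_iff.mp (Finset.mem_range.mp ht)

lemma eval_aeval_X {σ : Type*} (i : σ) (p : Polynomial k) (z : σ → k) :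
    eval z (Polynomial.aeval (X i : MvPolynomial σ k) p) = p.eval (z i) := by
  have h := Polynomial.aeval_algHom_apply (MvPolynomial.aeval z (R := k)) (X i : MvPolynomial σ k) p
  simp only [aeval_X] at h
  rw [show ((MvPolynomial.aeval z : MvPolynomial σ k →ₐ[k] k) : MvPolynomial σ k → k)
      = eval z from congrArg DFunLike.coe (MvPolynomial.coe_aeval_eq_eval z),
    Polynomial.coe_aeval_eq_eval] at h
  exact h.symm

end Aux

section Div
variable {k : Type*} [Field k]

/-- Division by (the scalar extension of) a monic scalar polynomial, with control of
arbitrary subadditive measures of the coefficients. -/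
lemma div_invariant {A : Type*} [CommRing A] [Algebra k A]
    (b : Polynomial k) (hb : b.Monic) (hb1 : 1 ≤ b.natDegree) (P : Polynomial A) :
    ∃ Q r : Polynomial A,
      P = Polynomial.map (algebraMap k A) b * Q + r ∧
      r.degree < (b.natDegree : WithBot ℕ) ∧
      ∀ (μ : A → ℕ) (w D : ℕ), μ 0 = 0 →
        (∀ x y : A, μ (x - y) ≤ max (μ x) (μ y)) →
        (∀ (c : k) (x : A), μ (algebraMap k A c * x) ≤ μ x) →
        (∀ t, P.coeff t ≠ 0 → μ (P.coeff t) + w * t ≤ D) →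
        ∀ t, r.coeff t ≠ 0 → μ (r.coeff t) + w * t ≤ D := by
  set b' : Polynomial A := Polynomial.map (algebraMap k A) b with hb'
  have hb'monic : b'.Monic := hb.map _
  suffices H : ∀ N (P : Polynomial A), P.natDegree ≤ N →
      ∃ Q r : Polynomial A,
      P = b' * Q + r ∧ r.degree < (b.natDegree : WithBot ℕ) ∧
      ∀ (μ : A → ℕ) (w D : ℕ), μ 0 = 0 →
        (∀ x y : A, μ (x - y) ≤ max (μ x) (μ y)) →
        (∀ (c : k) (x : A), μ (algebraMap k A c * x) ≤ μ x) →
        (∀ t, P.coeff t ≠ 0 → μ (P.coeff t) + w * t ≤ D) →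
        ∀ t, r.coeff t ≠ 0 → μ (r.coeff t) + w * t ≤ D by
    exact H P.natDegree P le_rfl
  intro N
  induction N with
  | zero =>
    intro P hP
    refine ⟨0, P, by ring, ?_, fun μ w D _ _ _ hP t ht => hP t ht⟩
    calc P.degree ≤ (P.natDegree : WithBot ℕ) := Polynomial.degree_le_natDegree
    _ ≤ (0 : ℕ) := by exact_mod_cast Nat.cast_le.mpr hP
    _ < (b.natDegree : WithBot ℕ) := by exact_mod_cast hb1
  | succ N ih =>
    intro P hPN
    by_cases hd : P.degree < (b.natDegree : WithBot ℕ)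
    · exact ⟨0, P, by ring, hd, fun μ w D _ _ _ hP t ht => hP t ht⟩
    · push_neg at hd
      have hP0 : P ≠ 0 := by
        rintro rfl
        rw [Polynomial.degree_zero] at hd
        exact (not_le.mpr (WithBot.bot_lt_coe _)) hd
      haveI : Nontrivial A := Polynomial.Nontrivial.of_polynomial_ne hP0
      have hb'deg : b'.degree = (b.natDegree : WithBot ℕ) := by
        rw [hb.degree_map (algebraMap k A), Polynomial.degree_eq_natDegree hb.ne_zero]
      set dP := P.natDegree with hdP
      have hmle : b.natDegree ≤ dP := by
        have := hd.trans (Polynomial.degree_le_natDegree)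
        exact_mod_cast this
      set e := dP - b.natDegree with he
      set L := P.leadingCoeff with hL
      have hLne : L ≠ 0 := Polynomial.leadingCoeff_ne_zero.mpr hP0
      set step : Polynomial A := b' * (Polynomial.C L * Polynomial.X ^ e) with hstep
      have hstepdeg : step.degree = P.degree := by
        rw [hstep, mul_comm, hb'monic.degree_mul, Polynomial.degree_C_mul_X_pow e hLne, hb'deg,
          ← Nat.cast_add, he, Nat.sub_add_cancel hmle, Polynomial.degree_eq_natDegree hP0]
      have hsteplead : step.leadingCoeff = L := by
        rw [hstep, mul_comm, Polynomial.leadingCoeff_mul']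
        · rw [hb'monic.leadingCoeff, Polynomial.leadingCoeff_C_mul_X_pow, mul_one]
        · rw [hb'monic.leadingCoeff, Polynomial.leadingCoeff_C_mul_X_pow, mul_one]
          exact hLne
      set P' : Polynomial A := P - step with hP'
      have hP'deg : P'.degree < P.degree := Polynomial.degree_sub_lt hstepdeg.symm hP0 hsteplead.symm
      have hP'N : P'.natDegree ≤ N := by
        by_cases hP'0 : P' = 0
        · simp [hP'0]
        · have := Polynomial.natDegree_lt_natDegree hP'0 hP'deg
          omega
      obtain ⟨Q, r, hQr, hrdeg, hinv⟩ := ih P' hP'N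
      refine ⟨Q + Polynomial.C L * Polynomial.X ^ e, r, ?_, hrdeg, ?_⟩
      · rw [mul_add]
        have : P = P' + step := by rw [hP']; ring
        rw [this, hQr, hstep]; ring
      · intro μ w D h0 hsub hsmul hP t ht
        refine hinv μ w D h0 hsub hsmul ?_ t ht
        -- invariant passes to P'
        intro s hs
        have hsle : s ≤ P'.natDegree := Polynomial.le_natDegree_of_ne_zero hs
        have hP'0 : P' ≠ 0 := fun h => hs (by simp [h])
        have hslt : s < dP := lt_of_le_of_lt hsle (Polynomial.natDegree_lt_natDegree hP'0 hP'deg)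
        have hDtop : μ (P.coeff dP) + w * dP ≤ D := hP dP (by
          rw [← Polynomial.leadingCoeff]; exact hLne)
        have hcoeff : P'.coeff s =
            P.coeff s - (if e ≤ s then algebraMap k A (b.coeff (s - e)) * L else 0) := by
          rw [hP', Polynomial.coeff_sub, hstep]
          congr 1
          rw [show b' * (Polynomial.C L * Polynomial.X ^ e) = b' * Polynomial.C L * Polynomial.X ^ e
            by ring, Polynomial.coeff_mul_X_pow', Polynomial.coeff_mul_C, Polynomial.coeff_map]
        have harm1 : μ (P.coeff s) + w * s ≤ D := by
          by_cases hzs : P.coeff s = 0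
          · rw [hzs, h0, zero_add]
            calc w * s ≤ w * dP := Nat.mul_le_mul_left w hslt.le
            _ ≤ D := le_trans (Nat.le_add_left _ _) hDtop
          · exact hP s hzs
        have harm2 : μ (if e ≤ s then algebraMap k A (b.coeff (s - e)) * L else 0) + w * s ≤ D := by
          split
          · calc μ (algebraMap k A (b.coeff (s - e)) * L) + w * s
                ≤ μ L + w * dP := Nat.add_le_add (hsmul _ _) (Nat.mul_le_mul_left w hslt.le)
            _ ≤ D := hDtop
          · rw [h0, zero_add]
            calc w * s ≤ w * dP := Nat.mul_le_mul_left w hslt.le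
            _ ≤ D := le_trans (Nat.le_add_left _ _) hDtop
        calc μ (P'.coeff s) + w * s
            ≤ max (μ (P.coeff s)) (μ (if e ≤ s then algebraMap k A (b.coeff (s - e)) * L else 0))
              + w * s := by rw [hcoeff]; exact Nat.add_le_add_right (hsub _ _) _
        _ ≤ D := by
          rcases max_cases (μ (P.coeff s))
            (μ (if e ≤ s then algebraMap k A (b.coeff (s - e)) * L else 0)) with ⟨h,_⟩|⟨h,_⟩ <;>
            rw [h] <;> assumption
end Div

section Red
variable {k : Type*} [Field k]

lemma aeval_X_zero_eq_map {n : ℕ} (b : Polynomial k) :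
    (finSuccEquiv k n) (Polynomial.aeval (X 0) b) =
      Polynomial.map (algebraMap k (MvPolynomial (Fin n) k)) b := by
  have h : ((finSuccEquiv k n).toAlgHom.comp
      (Polynomial.aeval (X 0) : Polynomial k →ₐ[k] MvPolynomial (Fin (n+1)) k)) =
      Polynomial.mapAlgHom (Algebra.ofId k (MvPolynomial (Fin n) k)) := by
    apply Polynomial.algHom_ext
    simp [Polynomial.mapAlgHom, finSuccEquiv_X_zero]
  calc (finSuccEquiv k n) (Polynomial.aeval (X 0) b)
      = ((finSuccEquiv k n).toAlgHom.comp
        (Polynomial.aeval (X 0) : Polynomial k →ₐ[k] MvPolynomial (Fin (n+1)) k)) b := rfl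
  _ = Polynomial.mapAlgHom (Algebra.ofId k (MvPolynomial (Fin n) k)) b := by rw [h]
  _ = Polynomial.map (algebraMap k (MvPolynomial (Fin n) k)) b := by
        rw [Polynomial.coe_mapAlgHom]
        rfl

lemma red0 {n : ℕ} (b : Polynomial k) (hb : b.Monic) (hb1 : 1 ≤ b.natDegree)
    (g : MvPolynomial (Fin (n+1)) k) :
    ∃ c r : MvPolynomial (Fin (n+1)) k,
      g = c * Polynomial.aeval (X 0) b + r ∧
      degreeOf 0 r < b.natDegree ∧
      r.totalDegree ≤ g.totalDegree ∧
      ∀ j : Fin n, degreeOf j.succ r ≤ degreeOf j.succ g := by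
  set φ := finSuccEquiv k n with hφ
  obtain ⟨Q, r', hQr, hdeg, hinv⟩ := div_invariant b hb hb1 (φ g)
  have hsupp : ∀ α : Fin (n+1) →₀ ℕ, α ∈ (φ.symm r').support →
      Finsupp.tail α ∈ (r'.coeff (α 0)).support := by
    intro α hα
    rw [mem_support_iff] at hα ⊢
    conv_lhs => rw [show r' = φ (φ.symm r') from (φ.apply_symm_apply r').symm]
    rw [hφ, finSuccEquiv_coeff_coeff, Finsupp.cons_tail]
    simpa [hφ] using hα
  refine ⟨φ.symm Q, φ.symm r', ?_, ?_, ?_, ?_⟩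
  · apply φ.injective
    rw [hQr]
    simp only [map_add, map_mul, AlgEquiv.apply_symm_apply]
    rw [hφ, aeval_X_zero_eq_map b]
    ring
  · have h1 : (φ (φ.symm r')).natDegree = degreeOf 0 (φ.symm r') :=
      natDegree_finSuccEquiv (φ.symm r')
    rw [AlgEquiv.apply_symm_apply] at h1
    rw [← h1]
    by_cases hr0 : r' = 0
    · simpa [hr0] using (show 0 < b.natDegree by omega)
    · exact (Polynomial.natDegree_lt_iff_degree_lt hr0).mpr hdeg
  · have key := hinv totalDegree 1 g.totalDegree totalDegree_zero
      (fun x y => totalDegree_sub x y)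
      (fun c x => by
        rw [MvPolynomial.algebraMap_eq]
        exact (totalDegree_mul _ _).trans (by simp))
      (fun t ht => by
        rw [one_mul]
        exact totalDegree_coeff_finSuccEquiv_add_le g t ht)
    apply Finset.sup_le
    intro α hα
    have h2 := hsupp α hα
    have h3 : (r'.coeff (α 0)) ≠ 0 := fun h => by simp [h] at h2
    calc (α.sum fun _ e => e) = ((Finsupp.tail α).cons (α 0)).sum fun _ e => e := by
          rw [Finsupp.cons_tail]
    _ = α 0 + ((Finsupp.tail α).sum fun _ e => e) := by rw [Finsupp.sum_cons]
    _ ≤ α 0 + (r'.coeff (α 0)).totalDegree := by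
          exact Nat.add_le_add_left (le_totalDegree h2) _
    _ ≤ g.totalDegree := by
          have := key (α 0) h3
          omega
  · intro j
    have key := hinv (degreeOf j) 0 (degreeOf j.succ g) (degreeOf_zero j)
      (fun x y => degreeOf_sub_le j x y)
      (fun c x => by rw [MvPolynomial.algebraMap_eq]; exact degreeOf_C_mul_le x j c)
      (fun t ht => by simpa using degreeOf_coeff_finSuccEquiv g j t)
    rw [degreeOf_eq_sup]
    apply Finset.sup_le
    intro α hα
    have h2 := hsupp α hα
    have h3 : (r'.coeff (α 0)) ≠ 0 := fun h => by simp [h] at h2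
    calc α j.succ = (Finsupp.tail α) j := (Finsupp.tail_apply j α).symm
    _ ≤ degreeOf j (r'.coeff (α 0)) := by rw [degreeOf_eq_sup]; exact Finset.le_sup (f := fun m => m j) h2
    _ ≤ degreeOf j.succ g := by simpa using key (α 0) h3

end Red

section Red2
variable {k : Type*} [Field k]

lemma totalDegree_rename_equiv {σ τ : Type*} (e : σ ≃ τ) (p : MvPolynomial σ k) :
    (rename e p).totalDegree = p.totalDegree := by
  refine le_antisymm (totalDegree_rename_le _ _) ?_
  have : p = rename e.symm (rename e p) := by
    rw [rename_rename]; simp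
  calc p.totalDegree = (rename e.symm (rename e p)).totalDegree := by rw [← this]
  _ ≤ (rename e p).totalDegree := totalDegree_rename_le _ _

lemma redi {n : ℕ} (b : Polynomial k) (hb : b.Monic) (hb1 : 1 ≤ b.natDegree)
    (i : Fin n) (g : MvPolynomial (Fin n) k) :
    ∃ c r : MvPolynomial (Fin n) k,
      g = c * Polynomial.aeval (X i) b + r ∧
      degreeOf i r < b.natDegree ∧
      r.totalDegree ≤ g.totalDegree ∧
      ∀ j : Fin n, j ≠ i → degreeOf j r ≤ degreeOf j g := by
  have hn := i.pos
  obtain ⟨n', rfl⟩ : ∃ n', n = n' + 1 := ⟨n - 1, by omega⟩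
  set e : Fin (n' + 1) ≃ Fin (n' + 1) := Equiv.swap 0 i with he
  obtain ⟨c', r', hgr, hd0, htot, hdj⟩ := red0 b hb hb1 (rename e g)
  have hren : ∀ p : MvPolynomial (Fin (n' + 1)) k,
      rename (⇑e) (rename (⇑e) p) = p := by
    intro p
    rw [rename_rename]
    have : (⇑e ∘ ⇑e) = id := by
      funext x
      simp [he, Equiv.swap_apply_self]
    rw [this, rename_id, AlgHom.id_apply]
  refine ⟨rename e c', rename e r', ?_, ?_, ?_, ?_⟩
  · have haev : rename (⇑e) (Polynomial.aeval (X 0) b)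
        = Polynomial.aeval (X i : MvPolynomial (Fin (n'+1)) k) b := by
      rw [← Polynomial.aeval_algHom_apply
        (rename (⇑e) : MvPolynomial (Fin (n'+1)) k →ₐ[k] MvPolynomial (Fin (n'+1)) k) (X 0) b,
        rename_X]
      have : e 0 = i := Equiv.swap_apply_left 0 i
      rw [this]
    have h2 := congrArg (rename (⇑e)) hgr
    rw [hren, map_add, map_mul, haev] at h2
    exact h2
  · have h1 : i = e 0 := (Equiv.swap_apply_left 0 i).symm
    rw [h1, degreeOf_rename_of_injective e.injective 0]
    exact hd0
  · rw [totalDegree_rename_equiv, ← totalDegree_rename_equiv e g]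
    exact htot
  · intro j hj
    have hej : e j ≠ 0 := by
      intro h
      apply hj
      have h2 := congrArg e h
      simp only [he, Equiv.swap_apply_self, Equiv.swap_apply_left] at h2
      exact h2
    obtain ⟨j', hj'⟩ : ∃ j' : Fin n', j'.succ = e j := by
      rcases Fin.eq_succ_of_ne_zero hej with ⟨j', hj'⟩
      exact ⟨j', hj'.symm⟩
    have h1 : e (e j) = j := by simp [he, Equiv.swap_apply_self]
    calc degreeOf j (rename (⇑e) r')
        = degreeOf (e (e j)) (rename (⇑e) r') := by rw [h1]
    _ = degreeOf (e j) r' := degreeOf_rename_of_injective e.injective (e j)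
    _ ≤ degreeOf (e j) (rename (⇑e) g) := by rw [← hj']; exact hdj j'
    _ = degreeOf j g := degreeOf_rename_of_injective e.injective j
end Red2

section Grid
variable {k : Type*} [Field k]

lemma grid_vanish : ∀ (n : ℕ) (p : MvPolynomial (Fin n) k) (Z : Fin n → Finset k),
    (∀ i, degreeOf i p < (Z i).card) →
    (∀ z : Fin n → k, (∀ i, z i ∈ Z i) → eval z p = 0) → p = 0 := by
  intro n
  induction n with
  | zero =>
    intro p Z _ hz
    obtain ⟨c, rfl⟩ := C_surjective (Fin 0) p
    have := hz (fun i => i.elim0) (fun i => i.elim0)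
    rw [eval_C] at this
    rw [this, map_zero]
  | succ n ih =>
    intro p Z hdeg hz
    have key : ∀ t, (finSuccEquiv k n p).coeff t = 0 := by
      intro t
      apply ih _ (fun j => Z j.succ)
      · intro j
        exact lt_of_le_of_lt (degreeOf_coeff_finSuccEquiv p j t) (hdeg j.succ)
      · intro s hs
        have hu : Polynomial.map (eval s) (finSuccEquiv k n p) = 0 := by
          apply Polynomial.eq_zero_of_natDegree_lt_card_of_eval_eq_zero' _ (Z 0)
          · intro y hy
            rw [← eval_eq_eval_mv_eval']
            apply hz
            intro i
            refine Fin.cases ?_ ?_ i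
            · rwa [Fin.cons_zero]
            · intro j
              rw [Fin.cons_succ]
              exact hs j
          · calc (Polynomial.map (eval s) (finSuccEquiv k n p)).natDegree
                ≤ (finSuccEquiv k n p).natDegree := Polynomial.natDegree_map_le
            _ = degreeOf 0 p := natDegree_finSuccEquiv p
            _ < (Z 0).card := hdeg 0
        have := coeff_eval_eq_eval_coeff (s' := s) (f := finSuccEquiv k n p) (i := t)
        rw [hu] at this
        simpa using this.symm
    have : finSuccEquiv k n p = 0 := Polynomial.ext fun t => by rw [key t]; simp
    have h2 := congrArg (finSuccEquiv k n).symm this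
    simpa using h2

end Grid


section VspLemmas
variable {σ K : Type*} [Field K] {F : Set (MvPolynomial σ K)} {e e₁ e₂ : ℕ}

lemma Vsp_le_of_mem_family {V : Submodule K (MvPolynomial σ K)}
    (h1 : ∀ f ∈ F, f.totalDegree ≤ e → f ∈ V)
    (h2 : ∀ g ∈ V, ∀ h : MvPolynomial σ K, (h * g).totalDegree ≤ e → h * g ∈ V) :
    Vsp F e ≤ V :=
  sInf_le ⟨h1, h2⟩

lemma Vsp_mem_gen {f : MvPolynomial σ K} (hf : f ∈ F) (hdeg : f.totalDegree ≤ e) :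
    f ∈ Vsp F e := by
  rw [Vsp, Submodule.mem_sInf]
  rintro V ⟨h1, _⟩
  exact h1 f hf hdeg

lemma Vsp_mul_mem {g : MvPolynomial σ K} (hg : g ∈ Vsp F e) (h : MvPolynomial σ K)
    (hd : (h * g).totalDegree ≤ e) : h * g ∈ Vsp F e := by
  rw [Vsp, Submodule.mem_sInf] at hg ⊢
  rintro V hV
  exact hV.2 g (hg V hV) h hd

lemma Vsp_le_restrict : Vsp F e ≤ restrictTotalDegree σ K e := by
  apply Vsp_le_of_mem_family
  · intro f _ hdeg
    rwa [mem_restrictTotalDegree]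
  · intro g _ h hd
    rwa [mem_restrictTotalDegree]

lemma Vsp_mono (h12 : e₁ ≤ e₂) : Vsp F e₁ ≤ Vsp F e₂ := by
  have : Vsp F e₁ ≤ Vsp F e₂ ⊓ restrictTotalDegree σ K e₁ := by
    apply Vsp_le_of_mem_family
    · intro f hf hdeg
      exact ⟨Vsp_mem_gen hf (hdeg.trans h12), (mem_restrictTotalDegree _ _ _).mpr hdeg⟩
    · rintro g ⟨hg1, _⟩ h hd
      exact ⟨Vsp_mul_mem hg1 h (hd.trans h12), (mem_restrictTotalDegree _ _ _).mpr hd⟩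
  exact this.trans inf_le_left

lemma Vsp_le_ideal : Vsp F e ≤ (Ideal.span F).restrictScalars K := by
  apply Vsp_le_of_mem_family
  · intro f hf _
    exact Ideal.subset_span hf
  · intro g hg h _
    exact Ideal.mul_mem_left _ h hg

end VspLemmas


/-- Let `k = 𝔽_q`, `ℱ = {f₁(x₁),…,fₙ(xₙ)}` with each `fᵢ` univariate
in `xᵢ` of degree at most `d`, and `ℰ = {xᵢ^q − xᵢ}`. Then (a) the last fall degree
of `ℱ ∪ ℰ` is at most `d + q`; (b) with `hᵢ(xᵢ) = gcd(xᵢ^q − xᵢ, fᵢ(xᵢ))`, the ideal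
generated by `ℱ ∪ ℰ` is generated by `{h₁(x₁),…,hₙ(xₙ)}`; and (c)
`hᵢ ≡_{dᵢ+q} 0 (mod ℱ ∪ ℰ)` where `dᵢ = deg fᵢ`. -/
theorem univariate_with_field_equations
    (k : Type*) [Field k] [Fintype k] (q n d : ℕ) (hq : Fintype.card k = q)
    (f : Fin n → Polynomial k) (hdeg : ∀ i, (f i).natDegree ≤ d) :
    (∀ e : ℕ,
      Vsp ((Set.range fun i : Fin n =>
              Polynomial.aeval (X i : MvPolynomial (Fin n) k) (f i)) ∪
            Set.range (fun i : Fin n => (X i : MvPolynomial (Fin n) k) ^ q - X i)) e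
          ⊓ restrictTotalDegree (Fin n) k (e - 1)
        ≠ Vsp ((Set.range fun i : Fin n =>
              Polynomial.aeval (X i : MvPolynomial (Fin n) k) (f i)) ∪
            Set.range (fun i : Fin n => (X i : MvPolynomial (Fin n) k) ^ q - X i)) (e - 1)
      → e ≤ d + q) ∧
    Ideal.span ((Set.range fun i : Fin n =>
              Polynomial.aeval (X i : MvPolynomial (Fin n) k) (f i)) ∪
            Set.range (fun i : Fin n => (X i : MvPolynomial (Fin n) k) ^ q - X i))
      = Ideal.span (Set.range fun i : Fin n =>
          Polynomial.aeval (X i : MvPolynomial (Fin n) k)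
            (EuclideanDomain.gcd (Polynomial.X ^ q - Polynomial.X) (f i))) ∧
    ∀ i : Fin n,
      Polynomial.aeval (X i : MvPolynomial (Fin n) k)
          (EuclideanDomain.gcd (Polynomial.X ^ q - Polynomial.X) (f i))
        ∈ Vsp ((Set.range fun i : Fin n =>
              Polynomial.aeval (X i : MvPolynomial (Fin n) k) (f i)) ∪
            Set.range (fun i : Fin n => (X i : MvPolynomial (Fin n) k) ^ q - X i))
            ((f i).natDegree + q) := by
  classical
  set E : Polynomial k := Polynomial.X ^ q - Polynomial.X with hE
  set h : Fin n → Polynomial k := fun i => EuclideanDomain.gcd E (f i) with hh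
  set Fset : Set (MvPolynomial (Fin n) k) :=
    (Set.range fun i : Fin n =>
        Polynomial.aeval (X i : MvPolynomial (Fin n) k) (f i)) ∪
      Set.range (fun i : Fin n => (X i : MvPolynomial (Fin n) k) ^ q - X i) with hFset
  have hq2 : 1 < q := hq ▸ Fintype.one_lt_card
  have hE0 : E ≠ 0 := FiniteField.X_pow_card_sub_X_ne_zero k hq2
  have hEdeg : E.natDegree = q := FiniteField.X_pow_card_sub_X_natDegree_eq k hq2
  have hEi : ∀ i : Fin n, ((X i : MvPolynomial (Fin n) k) ^ q - X i)
      = Polynomial.aeval (X i : MvPolynomial (Fin n) k) E := by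
    intro i
    rw [hE, map_sub, map_pow, Polynomial.aeval_X]
  have hgE : ∀ i, h i ∣ E := fun i => EuclideanDomain.gcd_dvd_left _ _
  have hgf : ∀ i, h i ∣ f i := fun i => EuclideanDomain.gcd_dvd_right _ _
  have hh0 : ∀ i, h i ≠ 0 := by
    intro i hzero
    exact hE0 ((EuclideanDomain.gcd_eq_zero_iff.mp hzero).1)
  have hhq : ∀ i, (h i).natDegree ≤ q :=
    fun i => hEdeg ▸ Polynomial.natDegree_le_of_dvd (hgE i) hE0
  -- Part (c)
  have partC : ∀ i : Fin n,
      Polynomial.aeval (X i : MvPolynomial (Fin n) k) (h i) ∈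
        Vsp Fset ((f i).natDegree + q) := by
    intro i
    have hEgen : ((X i : MvPolynomial (Fin n) k) ^ q - X i) ∈ Fset :=
      Set.mem_union_right _ ⟨i, rfl⟩
    have hEmem : Polynomial.aeval (X i : MvPolynomial (Fin n) k) E
        ∈ Vsp Fset ((f i).natDegree + q) := by
      rw [← hEi i]
      apply Vsp_mem_gen hEgen
      rw [hEi i]
      exact (totalDegree_aeval_X_le i E).trans (by omega)
    by_cases hf0 : f i = 0
    · have : h i = E := by rw [hh]; simp [hf0]
      rw [this]
      exact hEmem
    · set a : Polynomial k := EuclideanDomain.gcdA E (f i) with ha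
      set fm : Polynomial k := f i * Polynomial.C (f i).leadingCoeff⁻¹ with hfm
      have hfmm : fm.Monic := Polynomial.monic_mul_leadingCoeff_inv hf0
      set a' : Polynomial k := a %ₘ fm with ha'
      set r : Polynomial k := h i - E * a' with hr
      have hfr : f i ∣ r := by
        have h1 : h i = E * a + f i * EuclideanDomain.gcdB E (f i) :=
          EuclideanDomain.gcd_eq_gcd_ab E (f i)
        have h2 : a' + fm * (a /ₘ fm) = a := Polynomial.modByMonic_add_div a fm
        have h3 : f i ∣ fm * (a /ₘ fm) := Dvd.dvd.mul_right (Dvd.intro _ rfl) _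
        have h4 : a - a' = fm * (a /ₘ fm) := by linear_combination -h2
        have h5 : r = E * (a - a') + f i * EuclideanDomain.gcdB E (f i) := by
          rw [hr, h1]; ring
        rw [h5, h4]
        exact dvd_add (Dvd.dvd.mul_left h3 E) (Dvd.intro _ rfl)
      have hEa'deg : (E * a').natDegree ≤ (f i).natDegree + q := by
        by_cases ha'0 : a' = 0
        · simp [ha'0]
        · have hlt : a'.natDegree < fm.natDegree := by
            exact Polynomial.natDegree_lt_natDegree ha'0
              (Polynomial.degree_modByMonic_lt a hfmm)
          have hfmdeg : fm.natDegree ≤ (f i).natDegree := by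
            apply Polynomial.natDegree_le_natDegree
            rw [hfm]
            exact Polynomial.degree_mul_leadingCoeff_inv (f i) hf0 |>.le
          calc (E * a').natDegree ≤ E.natDegree + a'.natDegree :=
                Polynomial.natDegree_mul_le
          _ ≤ q + ((f i).natDegree - 1) := by
                have := hlt.trans_le hfmdeg
                omega
          _ ≤ (f i).natDegree + q := by omega
      have hrdeg : r.natDegree ≤ (f i).natDegree + q := by
        calc r.natDegree ≤ max (h i).natDegree (E * a').natDegree :=
              Polynomial.natDegree_sub_le _ _
        _ ≤ (f i).natDegree + q := max_le ((hhq i).trans (by omega)) hEa'deg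
      have hsplit : h i = E * a' + r := by rw [hr]; ring
      rw [hsplit, map_add]
      apply Submodule.add_mem
      · -- E * a' term
        rw [map_mul]
        rw [mul_comm]
        apply Vsp_mul_mem hEmem
        rw [← map_mul, mul_comm]
        exact (totalDegree_aeval_X_le i (E * a')).trans hEa'deg
      · -- r term
        obtain ⟨s, hs⟩ := hfr
        have hfgen : Polynomial.aeval (X i : MvPolynomial (Fin n) k) (f i) ∈ Fset :=
          Set.mem_union_left _ ⟨i, rfl⟩
        have hfmem : Polynomial.aeval (X i : MvPolynomial (Fin n) k) (f i)
            ∈ Vsp Fset ((f i).natDegree + q) := by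
          apply Vsp_mem_gen hfgen
          exact (totalDegree_aeval_X_le i (f i)).trans (by omega)
        rw [hs, map_mul, mul_comm]
        apply Vsp_mul_mem hfmem
        rw [← map_mul, mul_comm, ← hs]
        exact (totalDegree_aeval_X_le i r).trans hrdeg
  -- Part (b)
  have partB : Ideal.span Fset
      = Ideal.span (Set.range fun i : Fin n =>
          Polynomial.aeval (X i : MvPolynomial (Fin n) k) (h i)) := by
    apply le_antisymm
    · rw [Ideal.span_le]
      intro p hp
      rw [hFset] at hp
      rw [SetLike.mem_coe]
      rcases hp with ⟨i, rfl⟩ | ⟨i, rfl⟩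
      · beta_reduce
        obtain ⟨s, hs⟩ := hgf i
        rw [hs, map_mul]
        exact Ideal.mul_mem_right _ _ (Ideal.subset_span ⟨i, rfl⟩)
      · beta_reduce
        obtain ⟨s, hs⟩ := hgE i
        rw [hEi i, hs, map_mul]
        exact Ideal.mul_mem_right _ _ (Ideal.subset_span ⟨i, rfl⟩)
    · rw [Ideal.span_le]
      rintro p ⟨i, rfl⟩
      rw [SetLike.mem_coe]
      beta_reduce
      have h1 : h i = E * EuclideanDomain.gcdA E (f i) + f i * EuclideanDomain.gcdB E (f i) :=
        EuclideanDomain.gcd_eq_gcd_ab E (f i)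
      rw [h1, map_add, map_mul, map_mul]
      apply Ideal.add_mem
      · apply Ideal.mul_mem_right
        apply Ideal.subset_span
        rw [← hEi i]
        exact Set.mem_union_right _ ⟨i, rfl⟩
      · apply Ideal.mul_mem_right
        exact Ideal.subset_span (Set.mem_union_left _ ⟨i, rfl⟩)
  -- Key identification for part (a)
  have key : ∀ e : ℕ, d + q ≤ e →
      Vsp Fset e = (Ideal.span Fset).restrictScalars k ⊓
        restrictTotalDegree (Fin n) k e := by
    intro e he
    apply le_antisymm
    · exact le_inf Vsp_le_ideal Vsp_le_restrict
    · rintro g hg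
      rw [Submodule.mem_inf] at hg
      obtain ⟨hgI, hgdeg⟩ := hg
      rw [Submodule.restrictScalars_mem, partB] at hgI
      rw [mem_restrictTotalDegree] at hgdeg
      have hce : ∀ i : Fin n, Polynomial.aeval (X i : MvPolynomial (Fin n) k) (h i)
          ∈ Vsp Fset e :=
        fun i => Vsp_mono (by have := hdeg i; omega) (partC i)
      by_cases hdeg0 : ∃ i0, (h i0).natDegree = 0
      · obtain ⟨i0, hi0⟩ := hdeg0
        have hC : h i0 = Polynomial.C ((h i0).coeff 0) :=
          Polynomial.eq_C_of_natDegree_eq_zero hi0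
        set c0 := (h i0).coeff 0 with hc0
        have hc0ne : c0 ≠ 0 := by
          intro hz
          apply hh0 i0
          rw [hC, hz, map_zero]
        have hrw : (C c0⁻¹ * g) * Polynomial.aeval (X i0 : MvPolynomial (Fin n) k) (h i0)
            = g := by
          rw [hC, Polynomial.aeval_C, MvPolynomial.algebraMap_eq,
            mul_comm (C c0⁻¹) g, mul_assoc, ← C_mul, inv_mul_cancel₀ hc0ne, C_1, mul_one]
        have hmem := Vsp_mul_mem (hce i0) (C c0⁻¹ * g) (by rw [hrw]; exact hgdeg)
        rwa [hrw] at hmem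
      · push_neg at hdeg0
        have hm1 : ∀ i, 1 ≤ (h i).natDegree := fun i => Nat.one_le_iff_ne_zero.mpr (hdeg0 i)
        set hmn : Fin n → Polynomial k :=
          fun i => h i * Polynomial.C ((h i).leadingCoeff)⁻¹ with hhmn
        have hmono : ∀ i, (hmn i).Monic :=
          fun i => Polynomial.monic_mul_leadingCoeff_inv (hh0 i)
        have hmdeg : ∀ i, (hmn i).natDegree = (h i).natDegree := fun i =>
          Polynomial.natDegree_eq_of_degree_eq
            (Polynomial.degree_mul_leadingCoeff_inv (h i) (hh0 i))
        set W : Submodule k (MvPolynomial (Fin n) k) := Submodule.span k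
          {p | (∃ (i : Fin n) (c : MvPolynomial (Fin n) k),
            p = c * Polynomial.aeval (X i : MvPolynomial (Fin n) k) (h i)) ∧
            p.totalDegree ≤ e} with hW
        have hWV : W ≤ Vsp Fset e := by
          rw [hW, Submodule.span_le]
          rintro p ⟨⟨i, c, rfl⟩, hdegp⟩
          exact Vsp_mul_mem (hce i) c hdegp
        have hWI : W ≤ ((Ideal.span (Set.range fun i : Fin n =>
            Polynomial.aeval (X i : MvPolynomial (Fin n) k) (h i))).restrictScalars k) := by
          rw [hW, Submodule.span_le]
          rintro p ⟨⟨i, c, rfl⟩, -⟩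
          exact Ideal.mul_mem_left _ _ (Ideal.subset_span ⟨i, rfl⟩)
        have hmn_aeval : ∀ (i : Fin n) (cc : MvPolynomial (Fin n) k),
            cc * Polynomial.aeval (X i : MvPolynomial (Fin n) k) (hmn i)
            = (cc * C ((h i).leadingCoeff)⁻¹) *
              Polynomial.aeval (X i : MvPolynomial (Fin n) k) (h i) := by
          intro i cc
          have : hmn i = h i * Polynomial.C ((h i).leadingCoeff)⁻¹ := rfl
          rw [this, map_mul, Polynomial.aeval_C, MvPolynomial.algebraMap_eq]
          ring
        have reduce : ∀ S : Finset (Fin n), ∀ g0 : MvPolynomial (Fin n) k,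
            g0.totalDegree ≤ e →
            ∃ r, g0 - r ∈ W ∧ r.totalDegree ≤ g0.totalDegree ∧
              ∀ i ∈ S, degreeOf i r < (h i).natDegree := by
          intro S
          induction S using Finset.induction_on with
          | empty =>
            intro g0 _
            exact ⟨g0, by simpa using W.zero_mem, le_rfl, by simp⟩
          | @insert a S ha ih =>
            intro g0 hg0
            obtain ⟨r₁, hr₁W, hr₁deg, hr₁S⟩ := ih g0 hg0
            obtain ⟨c, r₂, hsplit, hd_a, hd_tot, hd_j⟩ := redi (hmn a) (hmono a)
              (by rw [hmdeg a]; exact hm1 a) a r₁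
            refine ⟨r₂, ?_, ?_, ?_⟩
            · have hcH : c * Polynomial.aeval (X a : MvPolynomial (Fin n) k) (hmn a) ∈ W := by
                apply Submodule.subset_span
                constructor
                · rw [hmn_aeval a c]
                  exact ⟨a, _, rfl⟩
                · have h6 : c * Polynomial.aeval (X a : MvPolynomial (Fin n) k) (hmn a)
                      = r₁ - r₂ := by rw [hsplit]; ring
                  rw [h6]
                  exact (totalDegree_sub r₁ r₂).trans
                    (le_trans (max_le hr₁deg (hd_tot.trans hr₁deg)) hg0)
              have h7 : g0 - r₂ = (g0 - r₁) +
                  c * Polynomial.aeval (X a : MvPolynomial (Fin n) k) (hmn a) := by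
                rw [hsplit]; ring
              rw [h7]
              exact W.add_mem hr₁W hcH
            · exact hd_tot.trans hr₁deg
            · intro i hi
              rcases eq_or_ne i a with rfl | hne
              · rw [← hmdeg i]; exact hd_a
              · exact lt_of_le_of_lt (hd_j i hne)
                  (hr₁S i (Finset.mem_of_mem_insert_of_ne hi hne))
        -- roots
        have hrE : E.roots = Finset.univ.val := by
          have := FiniteField.roots_X_pow_card_sub_X k
          rw [hq] at this
          exact this
        have hEsplits : Polynomial.Splits E := by
          rw [Polynomial.splits_iff_card_roots, hrE]
          simp [hEdeg, hq]
        have hmdvdE : ∀ i, hmn i ∣ E := by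
          intro i
          have hu : IsUnit (Polynomial.C ((h i).leadingCoeff)⁻¹) :=
            Polynomial.isUnit_C.mpr (isUnit_iff_ne_zero.mpr (inv_ne_zero
              (Polynomial.leadingCoeff_ne_zero.mpr (hh0 i))))
          exact (IsUnit.mul_right_dvd hu).mpr (hgE i)
        have hmsplits : ∀ i, Polynomial.Splits (hmn i) :=
          fun i => hEsplits.of_dvd hE0 (hmdvdE i)
        set Z : Fin n → Finset k := fun i => (hmn i).roots.toFinset with hZ
        have hZcard : ∀ i, (Z i).card = (h i).natDegree := by
          intro i
          have hnodup : (hmn i).roots.Nodup :=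
            Multiset.nodup_of_le (Polynomial.roots.le_of_dvd hE0 (hmdvdE i))
              (hrE ▸ Finset.univ.nodup)
          have : (Z i).card = Multiset.card (hmn i).roots :=
            Multiset.toFinset_card_eq_card_iff_nodup.mpr hnodup
          rw [this, Polynomial.splits_iff_card_roots.mp (hmsplits i), hmdeg i]
        obtain ⟨r, hrW, hrdeg, hrlt⟩ := reduce Finset.univ g hgdeg
        have hr0 : r = 0 := by
          apply grid_vanish n r Z
          · intro i
            rw [hZcard i]
            exact hrlt i (Finset.mem_univ i)
          · intro z hz
            have hrI : r ∈ Ideal.span (Set.range fun i : Fin n =>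
                Polynomial.aeval (X i : MvPolynomial (Fin n) k) (h i)) := by
              have h8 : r = g - (g - r) := by ring
              rw [h8]
              exact Ideal.sub_mem _ hgI (hWI hrW)
            have hker : Ideal.span (Set.range fun i : Fin n =>
                Polynomial.aeval (X i : MvPolynomial (Fin n) k) (h i))
                ≤ RingHom.ker (MvPolynomial.eval z) := by
              rw [Ideal.span_le]
              rintro p ⟨i, rfl⟩
              rw [SetLike.mem_coe, RingHom.mem_ker]
              beta_reduce
              rw [eval_aeval_X]
              have hz2 := hz i
              rw [Multiset.mem_toFinset] at hz2
              have hroot := (Polynomial.mem_roots (hmono i).ne_zero).mp hz2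
              have h9 : (hmn i).eval (z i) = 0 := hroot
              have h10 : hmn i = h i * Polynomial.C ((h i).leadingCoeff)⁻¹ := rfl
              rw [h10, Polynomial.eval_mul, Polynomial.eval_C, mul_eq_zero] at h9
              rcases h9 with h9 | h9
              · exact h9
              · exact absurd h9 (inv_ne_zero
                  (Polynomial.leadingCoeff_ne_zero.mpr (hh0 i)))
            exact RingHom.mem_ker.mp (hker hrI)
        rw [hr0, sub_zero] at hrW
        exact hWV hrW
  refine ⟨?_, partB, partC⟩
  intro e hne
  by_contra hgt
  push_neg at hgt
  apply hne
  have h1 : d + q ≤ e := by omega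
  have h2 : d + q ≤ e - 1 := by omega
  rw [key e h1, key (e - 1) h2]
  rw [inf_assoc]
  congr 1
  apply le_antisymm
  · exact inf_le_right
  · refine le_inf ?_ le_rfl
    intro p hp
    rw [mem_restrictTotalDegree] at hp ⊢
    omega
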